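/- (Jacobi inversion formula) For nonnegative integers j <= i and real alpha, beta with alpha+beta+1 > 0, the sum over k from j to i of (alpha+beta+2k+1) / (alpha+beta+k+j+1)_{i-j+1} times P_{i-k}^{(-alpha-i-1, -beta-i-1)}(x) P_{k-j}^{(alpha+j, beta+j)}(x) equals the Kronecker delta delta_{ij}. -/

import Mathlib

/-
Shifting α, β by j reduces to j = 0. Expanding both Jacobi polynomials in powers of
y = (x - 1) / 2, the Pochhammer symbols in the coefficient of y ^ a * y ^ b cancel down to
(-1) ^ a / (a! b!) times a multiple of the very-well-poised sum
∑ r, (-1) ^ r * C(M, r) * (u + 2r + 1) / (u + r + 1)_(M + 1) with M = m - a - b, which telescopes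
to [M = 0]. Only a + b = m survives, leaving y ^ m / m! * ∑ a, (-1) ^ a * C(m, a) = [m = 0].
-/

noncomputable def poch (a : ℝ) (k : ℕ) : ℝ := ∏ m ∈ Finset.range k, (a + m)

noncomputable def lag (α : ℝ) (n : ℕ) (x : ℝ) : ℝ :=
  ∑ k ∈ Finset.range (n + 1),
    (-1) ^ k * (poch (α + k + 1) (n - k) / (n - k).factorial) * x ^ k / k.factorial

noncomputable def jacobi (α β : ℝ) (n : ℕ) (x : ℝ) : ℝ :=
  ∑ k ∈ Finset.range (n + 1),
    poch ((n : ℝ) + α + β + 1) k * poch (α + k + 1) (n - k) /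
      (k.factorial * (n - k).factorial) * ((x - 1) / 2) ^ k

noncomputable def charlier (a : ℝ) (n : ℕ) (x : ℝ) : ℝ :=
  ∑ m ∈ Finset.range (n + 1),
    (∏ j ∈ Finset.range m, (x - (j : ℝ))) / m.factorial * (-a) ^ (n - m) / (n - m).factorial

open Finset

lemma poch_zero (a : ℝ) : poch a 0 = 1 := prod_range_zero _

lemma poch_succ_right (a : ℝ) (k : ℕ) : poch a (k + 1) = poch a k * (a + k) :=
  prod_range_succ _ _

lemma poch_add (a : ℝ) (p q : ℕ) : poch a (p + q) = poch a p * poch (a + p) q := by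
  rw [poch, prod_range_add]
  congr 1
  refine prod_congr rfl fun i _ => ?_
  push_cast
  ring

lemma poch_succ_left (a : ℝ) (k : ℕ) : poch a (k + 1) = a * poch (a + 1) k := by
  rw [add_comm k, poch_add]
  simp [poch]

lemma poch_pos {a : ℝ} (ha : 0 < a) (k : ℕ) : 0 < poch a k :=
  prod_pos fun i _ => by positivity

lemma poch_neg (x : ℝ) (n : ℕ) : poch (-x) n = (-1) ^ n * poch (x - n + 1) n := by
  rw [poch, poch, ← prod_range_reflect, show ((-1 : ℝ) ^ n) = ∏ _j ∈ range n, (-1) by simp,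
    ← prod_mul_distrib]
  refine prod_congr rfl fun j hj => ?_
  rw [Nat.cast_sub (by simp at hj; omega)]
  push_cast [Nat.cast_sub (show 1 ≤ n by simp at hj; omega)]
  ring

lemma sum_alternating_choose_mul_div_poch {u : ℝ} (hu : 0 < u + 1) (M : ℕ) :
    ∑ r ∈ range (M + 1), (-1) ^ r * M.choose r * (u + 2 * r + 1) / poch (u + r + 1) (M + 1) =
      if M = 0 then 1 else 0 := by
  obtain _ | N := M
  · simpa [poch_succ_right, poch_zero] using hu.ne'
  -- `G r = (-1) ^ (r + 1) * N.choose (r - 1) / poch (u + r + 1) (N + 1)`, written without the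
  -- truncated `r - 1` (which would make `G 0` nonzero) via
  -- `r * (N + 1).choose r = (N + 1) * N.choose (r - 1)`.
  set G : ℕ → ℝ := fun r =>
    -((-1) ^ r * r * (N + 1).choose r / ((N + 1) * poch (u + r + 1) (N + 1)))
  have htel : ∀ r ∈ range (N + 1 + 1),
      (-1) ^ r * (N + 1).choose r * (u + 2 * r + 1) / poch (u + r + 1) (N + 1 + 1) =
        G (r + 1) - G r := by
    intro r hr
    have hrN : r ≤ N + 1 := Nat.lt_succ_iff.mp (mem_range.mp hr)
    have hchoose : ((N + 1).choose (r + 1) : ℝ) * (r + 1) = (N + 1).choose r * (N + 1 - r) := by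
      have h := congrArg (Nat.cast (R := ℝ)) (Nat.choose_succ_right_eq (N + 1) r)
      push_cast [Nat.cast_sub hrN] at h
      exact h
    have hr : (0 : ℝ) ≤ r := r.cast_nonneg
    have hQ := poch_pos (show 0 < u + r + 2 by linarith) N
    have h1 : poch (u + r + 1) (N + 1) = (u + r + 1) * poch (u + r + 2) N := by
      rw [poch_succ_left]; ring_nf
    have h2 : poch (u + (r + 1 : ℕ) + 1) (N + 1) = poch (u + r + 2) N * (u + r + 2 + N) := by
      rw [poch_succ_right]; push_cast; ring_nf
    have h3 : poch (u + r + 1) (N + 1 + 1) =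
        (u + r + 1) * poch (u + r + 2) N * (u + r + 2 + N) := by
      rw [poch_succ_left, poch_succ_right]; ring_nf
    simp only [G, h1, h2, h3]
    have hur : u + r + 1 ≠ 0 := by linarith
    have hurN : u + r + 2 + N ≠ 0 := by linarith [N.cast_nonneg (α := ℝ)]
    field_simp
    push_cast
    rw [pow_succ]
    linear_combination (-(u + r + 1) * (-1) ^ r) * hchoose
  rw [sum_congr rfl htel, sum_range_sub]
  simp [G]

lemma sum_range_sum_range_sub_comm {M : Type*} [AddCommMonoid M] (n : ℕ) (f : ℕ → ℕ → M) :
    ∑ i ∈ range (n + 1), ∑ j ∈ range (n - i + 1), f i j =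
      ∑ j ∈ range (n + 1), ∑ i ∈ range (n - j + 1), f i j :=
  sum_comm' fun i j => by simp only [mem_range]; omega

lemma sum_range_sum_range_succ_comm {M : Type*} [AddCommMonoid M] (n : ℕ)
    (f : ℕ → ℕ → M) :
    ∑ i ∈ range (n + 1), ∑ j ∈ range (i + 1), f i j =
      ∑ j ∈ range (n + 1), ∑ k ∈ range (n - j + 1), f (j + k) j := by
  rw [sum_comm' (t' := range (n + 1)) (s' := fun j => Ico j (n + 1))
    fun i j => by simp only [mem_range, mem_Ico]; omega]
  refine sum_congr rfl fun j hj => ?_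
  rw [sum_Ico_eq_sum_range, Nat.sub_add_comm (Nat.lt_succ_iff.mp (mem_range.mp hj))]

noncomputable def jacobiCoeff (α β : ℝ) (n k : ℕ) : ℝ :=
  poch ((n : ℝ) + α + β + 1) k * poch (α + k + 1) (n - k) / (k.factorial * (n - k).factorial)

lemma jacobi_eq_sum_jacobiCoeff (α β : ℝ) (n : ℕ) (x : ℝ) :
    jacobi α β n x = ∑ k ∈ range (n + 1), jacobiCoeff α β n k * ((x - 1) / 2) ^ k := rfl

lemma jacobiCoeff_neg (A B : ℝ) {m l a s : ℕ} (h : l + a + s = m) :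
    jacobiCoeff (-A - m - 1) (-B - m - 1) (a + s) a =
      (-1) ^ (a + s) * poch (A + B + 2 * l + s + 2) a * poch (A + l + 1) s /
        (a.factorial * s.factorial) := by
  subst h
  rw [jacobiCoeff, Nat.add_sub_cancel_left,
    show ((a + s : ℕ) : ℝ) + (-A - (l + a + s : ℕ) - 1) + (-B - (l + a + s : ℕ) - 1) + 1 =
      -(A + B + 2 * l + s + 2 + a - 1) by push_cast; ring,
    show -A - ((l + a + s : ℕ) : ℝ) - 1 + a + 1 = -(A + l + 1 + s - 1) by push_cast; ring,
    poch_neg, poch_neg, pow_add]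
  ring_nf

noncomputable def inversionCoeff (A B : ℝ) (m l a b : ℕ) : ℝ :=
  (A + B + 2 * l + 1) / poch (A + B + l + 1) (m + 1) *
    jacobiCoeff (-A - m - 1) (-B - m - 1) (m - l) a * jacobiCoeff A B l b

lemma inversionCoeff_eq {A B : ℝ} (hAB : 0 < A + B + 1) (a b : ℕ) {r M : ℕ} (hr : r ≤ M) :
    inversionCoeff A B (a + b + M) (b + r) a b =
      (-1) ^ (a + M) * poch (A + b + 1) M / (a.factorial * b.factorial * M.factorial) *
        ((-1) ^ r * M.choose r * (A + B + 2 * b + 2 * r + 1) /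
          poch (A + B + 2 * b + r + 1) (M + 1)) := by
  obtain ⟨s, rfl⟩ : ∃ s, M = r + s := ⟨M - r, by omega⟩
  have hb : (0 : ℝ) ≤ b := b.cast_nonneg
  have hr₀ : (0 : ℝ) ≤ r := r.cast_nonneg
  have hs : (0 : ℝ) ≤ s := s.cast_nonneg
  have hsplit : poch (A + B + (b + r : ℕ) + 1) (a + b + (r + s) + 1) =
      poch (A + B + b + r + 1) b * poch (A + B + 2 * b + r + 1) (r + s + 1) *
        poch (A + B + 2 * (b + r : ℕ) + s + 2) a := by
    rw [show a + b + (r + s) + 1 = b + (r + s + 1) + a by omega, poch_add, poch_add]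
    push_cast
    ring_nf
  have hP₁ := poch_pos (show 0 < A + B + b + r + 1 by linarith) b
  have hP₂ := poch_pos (show 0 < A + B + 2 * b + r + 1 by linarith) (r + s + 1)
  have hP₃ := poch_pos (show 0 < A + B + 2 * (b + r : ℕ) + s + 2 by push_cast; linarith) a
  rw [inversionCoeff, hsplit, show a + b + (r + s) - (b + r) = a + s by omega,
    jacobiCoeff_neg A B (l := b + r) (by omega), jacobiCoeff, Nat.add_sub_cancel_left,
    Nat.cast_add_choose, poch_add (A + b + 1) r s]
  field_simp
  push_cast
  ring_nf
  simp only [pow_mul', neg_one_sq, one_pow, mul_one]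

lemma sum_inversionCoeff {A B : ℝ} (hAB : 0 < A + B + 1) {m a b : ℕ} (h : a + b ≤ m) :
    ∑ r ∈ range (m - a - b + 1), inversionCoeff A B m (b + r) a b =
      if a + b = m then (-1 : ℝ) ^ a / (a.factorial * b.factorial) else 0 := by
  obtain ⟨M, rfl⟩ : ∃ M, m = a + b + M := ⟨m - a - b, by omega⟩
  have hu : 0 < A + B + 2 * b + 1 := by linarith [b.cast_nonneg (α := ℝ)]
  rw [show a + b + M - a - b = M by omega,
    sum_congr rfl fun r hr => inversionCoeff_eq hAB a b (Nat.lt_succ_iff.mp (mem_range.mp hr)),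
    ← mul_sum, sum_alternating_choose_mul_div_poch hu M]
  rcases M with _ | M <;> simp [poch_zero]

lemma sum_neg_one_pow_div_factorial_mul_factorial (m : ℕ) :
    ∑ a ∈ range (m + 1), (-1 : ℝ) ^ a / (a.factorial * (m - a).factorial) =
      if m = 0 then 1 else 0 := by
  have h := congrArg (Int.cast (R := ℝ)) (Int.alternating_sum_range_choose (n := m))
  push_cast at h
  have hdiv : ∀ a ∈ range (m + 1), (-1 : ℝ) ^ a / (a.factorial * (m - a).factorial) =
      (-1) ^ a * m.choose a / m.factorial := by
    intro a ha
    rw [Nat.cast_choose ℝ (Nat.lt_succ_iff.mp (mem_range.mp ha))]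
    field_simp
  rw [sum_congr rfl hdiv, ← sum_div, h]
  split_ifs with hm <;> simp [hm]

theorem sum_jacobi_neg_mul_jacobi_eq_ite (A B x : ℝ) (hAB : 0 < A + B + 1) (m : ℕ) :
    ∑ l ∈ range (m + 1), (A + B + 2 * l + 1) / poch (A + B + l + 1) (m + 1) *
      jacobi (-A - m - 1) (-B - m - 1) (m - l) x * jacobi A B l x = if m = 0 then 1 else 0 := by
  set y := (x - 1) / 2
  have expand : ∀ l ∈ range (m + 1), (A + B + 2 * l + 1) / poch (A + B + l + 1) (m + 1) *
      jacobi (-A - m - 1) (-B - m - 1) (m - l) x * jacobi A B l x =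
        ∑ a ∈ range (m - l + 1), ∑ b ∈ range (l + 1),
          inversionCoeff A B m l a b * y ^ (a + b) := by
    intro l _
    rw [jacobi_eq_sum_jacobiCoeff, jacobi_eq_sum_jacobiCoeff, mul_assoc, sum_mul_sum, mul_sum]
    refine sum_congr rfl fun a _ => ?_
    rw [mul_sum]
    refine sum_congr rfl fun b _ => ?_
    rw [inversionCoeff, pow_add]
    ring
  have collapse : ∀ a ∈ range (m + 1),
      ∑ l ∈ range (m - a + 1), ∑ b ∈ range (l + 1),
          inversionCoeff A B m l a b * y ^ (a + b) =
        (-1) ^ a / (a.factorial * (m - a).factorial) * y ^ m := by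
    intro a ha
    have ha : a ≤ m := Nat.lt_succ_iff.mp (mem_range.mp ha)
    rw [sum_range_sum_range_succ_comm, sum_eq_single (m - a)]
    · rw [← sum_mul, sum_inversionCoeff hAB (by omega), if_pos (by omega),
        Nat.add_sub_cancel' ha]
    · intro b hb hbne
      rw [← sum_mul, sum_inversionCoeff hAB (by simp at hb; omega), if_neg (by omega), zero_mul]
    · simp
  rw [sum_congr rfl expand, sum_range_sum_range_sub_comm, sum_congr rfl collapse, ← sum_mul,
    sum_neg_one_pow_div_factorial_mul_factorial]
  split_ifs with hm <;> simp [hm]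

theorem stmt11 (α β x : ℝ) (h : α + β + 1 > 0) (i j : ℕ) (hij : j ≤ i) :
    ∑ k ∈ Finset.Icc j i,
      (α + β + 2 * k + 1) / poch (α + β + k + j + 1) (i - j + 1) *
        jacobi (-α - i - 1) (-β - i - 1) (i - k) x *
        jacobi (α + j) (β + j) (k - j) x =
      if i = j then 1 else 0 := by
  obtain ⟨m, rfl⟩ : ∃ m, i = j + m := ⟨i - j, by omega⟩
  have hAB : 0 < α + j + (β + j) + 1 := by linarith [j.cast_nonneg (α := ℝ)]
  rw [← Ico_add_one_right_eq_Icc, sum_Ico_eq_sum_range, Nat.add_sub_cancel_left,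
    show j + m + 1 - j = m + 1 by omega]
  convert sum_jacobi_neg_mul_jacobi_eq_ite (α + j) (β + j) x hAB m using 1
  · refine sum_congr rfl fun l _ => ?_
    rw [show j + m - (j + l) = m - l by omega, Nat.add_sub_cancel_left]
    push_cast
    ring_nf
  · simp
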